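/- Let {X_i : i ∈ I} be a family of Banach spaces and κ a cardinal. The ℓ1-sum (⊕_{i∈I} X_i)_{ℓ1} has the κ-perfect Daugavet property if and only if every X_i has the κ-perfect Daugavet property. -/

import Mathlib

universe u

/-- A slice of the closed unit ball of `X`. -/
def ballSlice {X : Type u} [NormedAddCommGroup X] [NormedSpace ℝ X]
    (f : X →L[ℝ] ℝ) (a : ℝ) : Set X :=
  {x | ‖x‖ ≤ 1 ∧ ‖f‖ - a < f x}

/-- `X` has the `κ`-perfect Daugavet property. -/
def HasKPerfectDaugavet (X : Type u) [NormedAddCommGroup X] [NormedSpace ℝ X]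
    (κ : Cardinal.{u}) : Prop :=
  ∀ Y : Set X, Cardinal.mk Y ≤ κ → (∀ y ∈ Y, ‖y‖ = 1) →
    ∀ (f : X →L[ℝ] ℝ) (a : ℝ), 0 < a →
      ∃ x ∈ ballSlice f a, ∀ y ∈ Y, ‖y + x‖ = 2

instance : Fact ((1 : ENNReal) ≤ 1) := ⟨le_rfl⟩

set_option linter.unusedSectionVars false

section Helpers

variable {I : Type u} {X : I → Type u} [∀ i, NormedAddCommGroup (X i)] [∀ i, NormedSpace ℝ (X i)]

lemma l1_hasSum_norm (x : lp X 1) : HasSum (fun i => ‖x i‖) ‖x‖ := by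
  have h := lp.hasSum_norm (E := X) (p := 1) (by simp) x
  simpa using h

lemma norm_single' [DecidableEq I] (i : I) (a : X i) : ‖lp.single 1 i a‖ = ‖a‖ := by
  have := lp.norm_single (E := X) (p := 1) (by simp)
    i a
  simpa using this

lemma single_add' [DecidableEq I] (i : I) (a b : X i) :
    lp.single 1 i (a + b) = lp.single 1 i a + lp.single 1 i b := by
  refine lp.ext (funext fun j => ?_)
  rw [lp.coeFn_add, Pi.add_apply]
  by_cases h : j = i
  · subst h; simp [lp.single_apply_self]
  · simp [lp.single_apply_ne _ _ _ h]

lemma norm_add_single [DecidableEq I] (x : lp X 1) (i : I) (v : X i) :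
    ‖x + lp.single 1 i v‖ = ‖x i + v‖ + (‖x‖ - ‖x i‖) := by
  have h1 : HasSum (fun j => ‖(x + lp.single 1 i v) j‖) ‖x + lp.single 1 i v‖ :=
    l1_hasSum_norm _
  have h2 : HasSum (Function.update (fun j => ‖x j‖) i ‖x i + v‖)
      (‖x i + v‖ - ‖x i‖ + ‖x‖) := (l1_hasSum_norm x).update i _
  have he : (fun j => ‖(x + lp.single 1 i v) j‖)
      = Function.update (fun j => ‖x j‖) i ‖x i + v‖ := by
    funext j
    rw [lp.coeFn_add, Pi.add_apply]
    by_cases h : j = i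
    · subst h; simp [lp.single_apply_self, Function.update_self]
    · simp [lp.single_apply_ne _ _ _ h, Function.update_of_ne h, Pi.single_eq_of_ne h]
  rw [he] at h1
  have := h1.unique h2
  linarith

/-- `lp.single` as a continuous linear map. -/
noncomputable def singleCLM [DecidableEq I] (i : I) : X i →L[ℝ] lp X 1 :=
  LinearMap.mkContinuous
    { toFun := fun a => lp.single 1 i a
      map_add' := fun a b => single_add' i a b
      map_smul' := fun c a => (lp.single_smul 1 i c a) }
    1 (fun a => by
      rw [one_mul]
      exact le_of_eq (norm_single' i a))

@[simp] lemma singleCLM_apply [DecidableEq I] (i : I) (a : X i) :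
    singleCLM (X := X) i a = lp.single 1 i a := rfl

/-- Coordinate projection as a continuous linear map. -/
noncomputable def projCLM (i : I) : lp X 1 →L[ℝ] X i :=
  LinearMap.mkContinuous
    { toFun := fun x => x i
      map_add' := fun x y => congrFun (lp.coeFn_add x y) i
      map_smul' := fun c x => congrFun (lp.coeFn_smul c x) i }
    1 (fun x => by rw [one_mul]; exact lp.norm_apply_le_norm one_ne_zero x i)

@[simp] lemma projCLM_apply (i : I) (x : lp X 1) : projCLM (X := X) i x = x i := rfl

lemma exists_slice_point {Z : Type*} [NormedAddCommGroup Z] [NormedSpace ℝ Z]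
    (g : Z →L[ℝ] ℝ) {ε : ℝ} (hε : 0 < ε) : ∃ u : Z, ‖u‖ ≤ 1 ∧ ‖g‖ - ε < g u := by
  obtain ⟨x, hx1, hx2⟩ := g.exists_lt_apply_of_lt_opNorm (by linarith : ‖g‖ - ε < ‖g‖)
  rw [Real.norm_eq_abs] at hx2
  rcases le_or_gt 0 (g x) with h | h
  · exact ⟨x, hx1.le, by rwa [abs_of_nonneg h] at hx2⟩
  · refine ⟨-x, by simpa using hx1.le, ?_⟩
    rw [map_neg]
    rwa [abs_of_neg h] at hx2

lemma exists_coord_norm [DecidableEq I] (f : lp X 1 →L[ℝ] ℝ) {ε : ℝ} (hε : 0 < ε)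
    (hf : 0 < ‖f‖) : ∃ i, ‖f‖ - ε < ‖f.comp (singleCLM i)‖ := by
  by_contra h
  push_neg at h
  set M := max (‖f‖ - ε) 0 with hM
  have hM0 : 0 ≤ M := le_max_right _ _
  have hMi : ∀ i, ‖f.comp (singleCLM i)‖ ≤ M := fun i => (h i).trans (le_max_left _ _)
  have hb : ∀ x : lp X 1, ‖f x‖ ≤ M * ‖x‖ := by
    intro x
    have hs : HasSum (fun i => f (lp.single 1 i (x i))) (f x) :=
      (lp.hasSum_single (by simp) x).mapL f
    have hnorm : ∀ i, ‖f (lp.single 1 i (x i))‖ ≤ M * ‖x i‖ := by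
      intro i
      calc ‖f (lp.single 1 i (x i))‖ = ‖(f.comp (singleCLM i)) (x i)‖ := rfl
        _ ≤ ‖f.comp (singleCLM i)‖ * ‖x i‖ := (f.comp (singleCLM i)).le_opNorm _
        _ ≤ M * ‖x i‖ := by gcongr; exact hMi i
    have hsum2 : Summable fun i => M * ‖x i‖ := (l1_hasSum_norm x).summable.mul_left M
    have hsum1 : Summable fun i => ‖f (lp.single 1 i (x i))‖ :=
      Summable.of_nonneg_of_le (fun i => norm_nonneg _) hnorm hsum2
    calc ‖f x‖ = ‖∑' i, f (lp.single 1 i (x i))‖ := by rw [hs.tsum_eq]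
      _ ≤ ∑' i, ‖f (lp.single 1 i (x i))‖ := norm_tsum_le_tsum_norm hsum1
      _ ≤ ∑' i, M * ‖x i‖ := Summable.tsum_le_tsum hnorm hsum1 hsum2
      _ = M * ‖x‖ := by rw [tsum_mul_left, (l1_hasSum_norm x).tsum_eq]
  have h1 : ‖f‖ ≤ M := f.opNorm_le_bound hM0 hb
  have h2 : M < ‖f‖ := max_lt (by linarith) hf
  linarith

lemma norm_smul_add_two {Z : Type*} [NormedAddCommGroup Z] [NormedSpace ℝ Z]
    {z u : Z} (hz : ‖z‖ = 1) (hu : ‖u‖ ≤ 1) (h : ‖z + u‖ = 2) {r : ℝ}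
    (hr0 : 0 ≤ r) (hr1 : r ≤ 1) : ‖r • z + u‖ = 1 + r := by
  have hle : ‖r • z + u‖ ≤ r + ‖u‖ := by
    calc ‖r • z + u‖ ≤ ‖r • z‖ + ‖u‖ := norm_add_le _ _
      _ = r + ‖u‖ := by rw [norm_smul, Real.norm_eq_abs, abs_of_nonneg hr0, hz, mul_one]
  have hge : 2 ≤ (1 - r) + ‖r • z + u‖ := by
    have : z + u = (1 - r) • z + (r • z + u) := by module
    calc (2 : ℝ) = ‖z + u‖ := h.symm
      _ = ‖(1 - r) • z + (r • z + u)‖ := by rw [← this]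
      _ ≤ ‖(1 - r) • z‖ + ‖r • z + u‖ := norm_add_le _ _
      _ = (1 - r) + ‖r • z + u‖ := by
          rw [norm_smul, Real.norm_eq_abs, abs_of_nonneg (by linarith), hz, mul_one]
  linarith [hu]

lemma norm_add_two_of_smul {Z : Type*} [NormedAddCommGroup Z] [NormedSpace ℝ Z]
    {z u : Z} (hz : ‖z‖ = 1) (hu : ‖u‖ = 1) {r : ℝ}
    (hr0 : 0 < r) (hr1 : r ≤ 1) (h : ‖z + r • u‖ = 1 + r) : ‖z + u‖ = 2 := by
  have hle : ‖z + u‖ ≤ 2 := by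
    calc ‖z + u‖ ≤ ‖z‖ + ‖u‖ := norm_add_le _ _
      _ = 2 := by rw [hz, hu]; norm_num
  have key : z + r • u = r • (z + u) + (1 - r) • z := by module
  have hge : 1 + r ≤ r * ‖z + u‖ + (1 - r) := by
    calc 1 + r = ‖z + r • u‖ := h.symm
      _ = ‖r • (z + u) + (1 - r) • z‖ := by rw [key]
      _ ≤ ‖r • (z + u)‖ + ‖(1 - r) • z‖ := norm_add_le _ _
      _ = r * ‖z + u‖ + (1 - r) := by
          rw [norm_smul, norm_smul, Real.norm_eq_abs, Real.norm_eq_abs,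
            abs_of_nonneg hr0.le, abs_of_nonneg (by linarith), hz, mul_one]
  nlinarith

lemma backward_key [DecidableEq I] {κ : Cardinal.{u}} (i₀ : I)
    (hX : HasKPerfectDaugavet (X i₀) κ) (Y : Set (lp X 1))
    (hκ : Cardinal.mk Y ≤ κ) (h1 : ∀ y ∈ Y, ‖y‖ = 1)
    (g : X i₀ →L[ℝ] ℝ) (hg : 0 < ‖g‖) {b : ℝ} (hb : 0 < b) :
    ∃ u : X i₀, ‖u‖ ≤ 1 ∧ ‖g‖ - b < g u ∧ ∀ y ∈ Y, ‖y + lp.single 1 i₀ u‖ = 2 := by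
  have hcoord : ∀ y ∈ Y, ‖y i₀‖ ≤ 1 := fun y hy =>
    (lp.norm_apply_le_norm one_ne_zero y i₀).trans (le_of_eq (h1 y hy))
  by_cases hY' : ∃ y ∈ Y, (y : ∀ j, X j) i₀ ≠ 0
  · set Y' : Set (X i₀) := (fun y : lp X 1 => ‖y i₀‖⁻¹ • y i₀) '' {y ∈ Y | y i₀ ≠ 0}
      with hY'def
    have hκ' : Cardinal.mk Y' ≤ κ :=
      ((Cardinal.mk_image_le).trans (Cardinal.mk_le_mk_of_subset
        (Set.sep_subset _ _))).trans hκ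
    have h1' : ∀ z ∈ Y', ‖z‖ = 1 := by
      rintro z ⟨y, ⟨hy, hy0⟩, rfl⟩
      rw [norm_smul, norm_inv, norm_norm, inv_mul_cancel₀ (norm_ne_zero_iff.mpr hy0)]
    obtain ⟨u, ⟨hu1, hu2⟩, hu3⟩ := hX Y' hκ' h1' g b hb
    obtain ⟨y₀, hy₀, hy₀0⟩ := hY'
    have hz₀ : (‖y₀ i₀‖⁻¹ • y₀ i₀) ∈ Y' := ⟨y₀, ⟨hy₀, hy₀0⟩, rfl⟩
    have hunorm : ‖u‖ = 1 := by
      have h2 := hu3 _ hz₀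
      have h3 := norm_add_le (‖y₀ i₀‖⁻¹ • y₀ i₀) u
      rw [h2, h1' _ hz₀] at h3
      linarith
    refine ⟨u, hu1, hu2, ?_⟩
    intro y hy
    rw [norm_add_single, h1 y hy]
    by_cases h0 : (y : ∀ j, X j) i₀ = 0
    · rw [h0, zero_add, hunorm, norm_zero]
      ring
    · set r := ‖y i₀‖ with hr
      have hrpos : 0 < r := norm_pos_iff.mpr h0
      have hz : (r⁻¹ • y i₀) ∈ Y' := ⟨y, ⟨hy, h0⟩, rfl⟩
      have hsum : ‖y i₀ + u‖ = 1 + r := by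
        have := norm_smul_add_two (h1' _ hz) (le_of_eq hunorm) (hu3 _ hz) hrpos.le
          (hcoord y hy)
        rwa [smul_inv_smul₀ (ne_of_gt hrpos)] at this
      rw [hsum]; ring
  · push_neg at hY'
    have hε : 0 < min b ‖g‖ / 2 := by positivity
    obtain ⟨u₀, hu₀1, hu₀2⟩ := exists_slice_point g hε
    have hεg : min b ‖g‖ / 2 ≤ ‖g‖ / 2 := by
      have := min_le_right b ‖g‖; linarith
    have hgu₀ : 0 < g u₀ := by linarith
    have hu₀0 : u₀ ≠ 0 := fun h => by simp [h] at hgu₀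
    have hn : 0 < ‖u₀‖ := norm_pos_iff.mpr hu₀0
    have hunorm : ‖(‖u₀‖⁻¹ • u₀ : X i₀)‖ = 1 := by
      rw [norm_smul, norm_inv, norm_norm, inv_mul_cancel₀ hn.ne']
    refine ⟨‖u₀‖⁻¹ • u₀, le_of_eq hunorm, ?_, ?_⟩
    · have happ : g (‖u₀‖⁻¹ • u₀) = ‖u₀‖⁻¹ * g u₀ := by
        rw [map_smul, smul_eq_mul]
      have hinv : 1 ≤ ‖u₀‖⁻¹ := by
        rw [le_inv_comm₀ one_pos hn]
        simpa using hu₀1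
      have hmono : g u₀ ≤ ‖u₀‖⁻¹ * g u₀ := le_mul_of_one_le_left hgu₀.le hinv
      have hmin : min b ‖g‖ / 2 < b := by
        have := min_le_left b ‖g‖; linarith
      rw [happ]; linarith
    · intro y hy
      rw [norm_add_single, hY' y hy, h1 y hy, zero_add, hunorm, norm_zero]
      ring

end Helpers

/-- The `ℓ₁`-sum of a family of Banach spaces has the `κ`-perfect Daugavet property if
and only if every summand has the `κ`-perfect Daugavet property. -/
theorem l1Sum_kPerfectDaugavet_iff {I : Type u} (X : I → Type u)
    [∀ i, NormedAddCommGroup (X i)] [∀ i, NormedSpace ℝ (X i)] [∀ i, CompleteSpace (X i)]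
    (κ : Cardinal.{u}) :
    HasKPerfectDaugavet (lp X 1) κ ↔ ∀ i, HasKPerfectDaugavet (X i) κ := by
  classical
  constructor
  · intro H i Y hκ h1 f a ha
    rcases Set.eq_empty_or_nonempty Y with rfl | ⟨y₀, hy₀⟩
    · obtain ⟨u, hu1, hu2⟩ := exists_slice_point f ha
      exact ⟨u, ⟨hu1, hu2⟩, fun y hy => absurd hy (Set.notMem_empty y)⟩
    · have hy₀1 : ‖y₀‖ = 1 := h1 y₀ hy₀
      have hy₀ne : y₀ ≠ 0 := by
        intro h; rw [h, norm_zero] at hy₀1; norm_num at hy₀1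
      -- reduce to a norm-one functional
      obtain ⟨g, b, hgnorm, hb, hb1, hincl⟩ :
          ∃ (g : X i →L[ℝ] ℝ) (b : ℝ), ‖g‖ = 1 ∧ 0 < b ∧ b ≤ 1 ∧
            ∀ u : X i, 1 - b < g u → ‖f‖ - a < f u := by
        by_cases hf : ‖f‖ = 0
        · obtain ⟨g, hg1, -⟩ := exists_dual_vector ℝ y₀ (norm_ne_zero_iff.mpr hy₀ne)
          refine ⟨g, 1, hg1, one_pos, le_refl 1, fun u _ => ?_⟩
          have hf0 : f = 0 := norm_eq_zero.mp hf
          rw [hf0]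
          simp only [ContinuousLinearMap.zero_apply, norm_zero]
          linarith
        · have hfpos : 0 < ‖f‖ := lt_of_le_of_ne (norm_nonneg f) (Ne.symm hf)
          refine ⟨‖f‖⁻¹ • f, min 1 (a / ‖f‖), ?_, lt_min one_pos (div_pos ha hfpos),
            min_le_left _ _, ?_⟩
          · rw [norm_smul (‖f‖⁻¹) f, norm_inv, norm_norm, inv_mul_cancel₀ hfpos.ne']
          · intro u hu
            have happ : (‖f‖⁻¹ • f) u = ‖f‖⁻¹ * f u := rfl
            rw [happ] at hu
            have hba : ‖f‖ * min 1 (a / ‖f‖) ≤ a := by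
              calc ‖f‖ * min 1 (a / ‖f‖) ≤ ‖f‖ * (a / ‖f‖) := by
                    gcongr; exact min_le_right _ _
                _ = a := by field_simp
            have := mul_lt_mul_of_pos_left hu hfpos
            rw [mul_sub, ← mul_assoc, mul_inv_cancel₀ hfpos.ne', one_mul, mul_one] at this
            linarith
      -- transfer to the ℓ¹ sum
      set Y'' : Set (lp X 1) := lp.single 1 i '' Y with hY''def
      have hκ'' : Cardinal.mk Y'' ≤ κ := (Cardinal.mk_image_le).trans hκ
      have h1'' : ∀ z ∈ Y'', ‖z‖ = 1 := by
        rintro z ⟨y, hy, rfl⟩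
        rw [norm_single']; exact h1 y hy
      set f' : lp X 1 →L[ℝ] ℝ := g.comp (projCLM i) with hf'def
      have hf'app : ∀ x : lp X 1, f' x = g (x i) := fun x => rfl
      have hf'1 : ‖f'‖ = 1 := by
        apply le_antisymm
        · apply ContinuousLinearMap.opNorm_le_bound _ zero_le_one
          intro x
          rw [hf'app, one_mul]
          calc ‖g (x i)‖ ≤ ‖g‖ * ‖x i‖ := g.le_opNorm _
            _ = ‖x i‖ := by rw [hgnorm, one_mul]
            _ ≤ ‖x‖ := lp.norm_apply_le_norm one_ne_zero x i
        · rw [← hgnorm]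
          apply ContinuousLinearMap.opNorm_le_bound g (norm_nonneg f')
          intro u
          have heq : f' (lp.single 1 i u) = g u := by
            rw [hf'app, lp.single_apply_self]
          calc ‖g u‖ = ‖f' (lp.single 1 i u)‖ := by rw [heq]
            _ ≤ ‖f'‖ * ‖lp.single 1 i u‖ := f'.le_opNorm _
            _ = ‖f'‖ * ‖u‖ := by rw [norm_single']
      obtain ⟨x, ⟨hx1, hx2⟩, hx3⟩ := H Y'' hκ'' h1'' f' (b / 2) (half_pos hb)
      rw [hf'1, hf'app] at hx2
      set r := ‖x i‖ with hrdef
      have hr1 : r ≤ 1 := (lp.norm_apply_le_norm one_ne_zero x i).trans hx1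
      have hgr : g (x i) ≤ r := by
        have h5 := g.le_opNorm (x i)
        rw [hgnorm, one_mul, Real.norm_eq_abs] at h5
        exact (le_abs_self _).trans h5
      have hrpos : 0 < r := by linarith
      set u := r⁻¹ • x i with hudef
      have hu_norm : ‖u‖ = 1 := by
        rw [hudef, norm_smul, norm_inv, norm_norm, ← hrdef, inv_mul_cancel₀ hrpos.ne']
      have hgu : 1 - b < g u := by
        have happ : g u = r⁻¹ * g (x i) := by rw [hudef, map_smul, smul_eq_mul]
        have hinv : 1 ≤ r⁻¹ := by
          rw [le_inv_comm₀ one_pos hrpos]; simpa using hr1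
        have hmono : g (x i) ≤ r⁻¹ * g (x i) :=
          le_mul_of_one_le_left (by linarith) hinv
        rw [happ]; linarith
      refine ⟨u, ⟨le_of_eq hu_norm, hincl u hgu⟩, ?_⟩
      intro y hy
      have hy'' : (lp.single 1 i y : lp X 1) ∈ Y'' := ⟨y, hy, rfl⟩
      have h2 := hx3 _ hy''
      rw [add_comm, norm_add_single] at h2
      have hle2 : ‖x i + y‖ ≤ 1 + r := by
        calc ‖x i + y‖ ≤ ‖x i‖ + ‖y‖ := norm_add_le _ _
          _ = 1 + r := by rw [h1 y hy, ← hrdef]; ring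
      have heq2 : ‖y + x i‖ = 1 + r := by
        rw [add_comm]
        have : 2 - ‖x‖ + r ≤ ‖x i + y‖ := by linarith
        have h6 : 1 + r ≤ ‖x i + y‖ := by linarith
        linarith
      have hxi : x i = r • u := by
        rw [hudef, smul_inv_smul₀ hrpos.ne']
      rw [hxi] at heq2
      exact norm_add_two_of_smul (h1 y hy) hu_norm hrpos hr1 heq2
  · intro hX Y hκ h1 f a ha
    by_cases hfa : a / 2 ≤ ‖f‖
    · have hf0 : 0 < ‖f‖ := lt_of_lt_of_le (half_pos ha) hfa
      obtain ⟨i₀, hi₀⟩ := exists_coord_norm f (half_pos ha) hf0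
      set g := f.comp (singleCLM i₀) with hgdef
      have hg : 0 < ‖g‖ := lt_of_le_of_lt (by linarith) hi₀
      obtain ⟨u, hu1, hu2, hu3⟩ := backward_key i₀ (hX i₀) Y hκ h1 g hg (half_pos ha)
      refine ⟨lp.single 1 i₀ u, ⟨?_, ?_⟩, fun y hy => hu3 y hy⟩
      · rw [norm_single']; exact hu1
      · have happ : f (lp.single 1 i₀ u) = g u := rfl
        rw [happ]; linarith
    · push_neg at hfa
      rcases Set.eq_empty_or_nonempty Y with rfl | ⟨y₀, hy₀⟩
      · refine ⟨0, ⟨by simp, ?_⟩, fun y hy => absurd hy (Set.notMem_empty y)⟩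
        rw [map_zero]; linarith [norm_nonneg f]
      · have hy₀1 : ‖y₀‖ = 1 := h1 y₀ hy₀
        have heco : ∃ i, (y₀ : ∀ j, X j) i ≠ 0 := by
          by_contra h
          push_neg at h
          have h0 := l1_hasSum_norm y₀
          simp only [h, norm_zero] at h0
          have := h0.unique hasSum_zero
          rw [hy₀1] at this; norm_num at this
        obtain ⟨i₀, hi₀⟩ := heco
        obtain ⟨g', hg'1, -⟩ := exists_dual_vector ℝ (y₀ i₀) (norm_ne_zero_iff.mpr hi₀)
        have hg'pos : 0 < ‖g'‖ := by rw [hg'1]; exact one_pos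
        obtain ⟨u, hu1, -, hu3⟩ := backward_key i₀ (hX i₀) Y hκ h1 g' hg'pos one_pos
        refine ⟨lp.single 1 i₀ u, ⟨?_, ?_⟩, fun y hy => hu3 y hy⟩
        · rw [norm_single']; exact hu1
        · set x := lp.single 1 i₀ u with hxdef
          have hxn : ‖x‖ ≤ 1 := by rw [hxdef, norm_single']; exact hu1
          have h5 := f.le_opNorm x
          have h6 : ‖f‖ * ‖x‖ ≤ ‖f‖ := mul_le_of_le_one_right (norm_nonneg f) hxn
          rw [Real.norm_eq_abs] at h5
          have h7 : -‖f‖ ≤ f x := by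
            have := neg_abs_le (f x); linarith
          linarith
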